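/- arXiv:0705.4111 — 5 statements merged into one kernel-verified Lean document; each statement's English description precedes it below -/
import Mathlib

section
/- For every natural number k and every real number x, sin((k+1)x) = 2^k · ∏_{i=0}^{k} sin(x + iπ/(k+1)). -/
/-! With `θᵢ = z + iπ/n` (`n = k + 1`) one has `2i sin θᵢ · e^{-iθᵢ} = 1 - e^{-2iθᵢ} = 1 - ζⁱu`,
where `ζ = e^{-2πi/n}` is a primitive `n`-th root of unity and `u = e^{-2iz}`. Multiplying over
`i` and using `∏ᵢ (1 - ζⁱu) = 1 - uⁿ = 2i sin(nz) · e^{-inz}` leaves only the phase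
`e^{-i Σ θᵢ} = e^{-inz} (-i)^k`, and `(2i)ⁿ (-i)^k = 2i · 2^k`. -/

open Real Finset

theorem IsPrimitiveRoot.prod_range_one_sub_pow_mul {R : Type*} [CommRing R] [IsDomain R]
    {ζ : R} {n : ℕ} (hζ : IsPrimitiveRoot ζ n) (hn : 0 < n) (a : R) :
    ∏ i ∈ range n, (1 - ζ ^ i * a) = 1 - a ^ n := by
  simpa [Polynomial.eval_prod] using
    (congrArg (Polynomial.eval 1) (X_pow_sub_C_eq_prod hζ hn (rfl : a ^ n = _))).symm

namespace Complex

theorem two_mul_I_mul_sin_mul_exp_neg (z : ℂ) :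
    2 * I * sin z * exp (-(z * I)) = 1 - exp (-(2 * z * I)) := by
  have h : 2 * I * sin z = exp (z * I) - exp (-(z * I)) := by
    rw [sin]; ring_nf; rw [I_sq]; ring
  rw [h, sub_mul, ← exp_add, ← exp_add]
  ring_nf
  rw [exp_zero]

theorem sum_range_succ_add_nat_mul_pi_div (k : ℕ) (z : ℂ) :
    ∑ i ∈ range (k + 1), (z + i * π / (k + 1)) = (k + 1) * z + k * (π / 2) := by
  have hsum : (∑ i ∈ range (k + 1), (i : ℂ)) * 2 = (k + 1) * k := by
    rw [← Nat.cast_sum]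
    exact_mod_cast k.add_sub_cancel 1 ▸ sum_range_id_mul_two (k + 1)
  rw [sum_add_distrib, sum_const, card_range, nsmul_eq_mul, ← sum_div, ← sum_mul]
  field_simp
  push_cast
  linear_combination π * hsum

theorem sin_succ_mul_eq_two_pow_mul_prod (k : ℕ) (z : ℂ) :
    sin ((k + 1) * z) = 2 ^ k * ∏ i ∈ range (k + 1), sin (z + i * π / (k + 1)) := by
  set θ : ℕ → ℂ := fun i ↦ z + i * π / (k + 1)
  set ζ := exp (-(2 * π * I / (k + 1)))
  have hζ : IsPrimitiveRoot ζ (k + 1) := by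
    simpa [ζ, exp_neg] using (isPrimitiveRoot_exp (k + 1) k.succ_ne_zero).inv
  have hθ (i : ℕ) : exp (-(2 * θ i * I)) = ζ ^ i * exp (-(2 * z * I)) := by
    rw [← exp_nat_mul, ← exp_add]; simp only [θ]; ring_nf
  have key : (2 * I) ^ (k + 1) * (∏ i ∈ range (k + 1), sin (θ i)) *
      exp (-((∑ i ∈ range (k + 1), θ i) * I)) =
      2 * I * sin ((k + 1) * z) * exp (-((k + 1) * z * I)) := by
    calc _ = ∏ i ∈ range (k + 1), (1 - ζ ^ i * exp (-(2 * z * I))) := by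
          simp_rw [← hθ, ← two_mul_I_mul_sin_mul_exp_neg, sum_mul, ← sum_neg_distrib, exp_sum,
            prod_mul_distrib, prod_const, card_range]
          ring
      _ = _ := by
        rw [hζ.prod_range_one_sub_pow_mul k.succ_pos, two_mul_I_mul_sin_mul_exp_neg,
          ← exp_nat_mul]
        push_cast; ring_nf
  have hphase : exp (-(k * (π / 2) * I)) = (-I) ^ k := by
    rw [← exp_neg_pi_div_two_mul_I, ← exp_nat_mul]; ring_nf
  have hpow : (2 * I) ^ (k + 1) * (-I) ^ k = 2 * I * 2 ^ k := by
    have h2 : 2 * I * -I = 2 := by rw [mul_neg, mul_assoc, I_mul_I]; ring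
    rw [pow_succ', mul_assoc, ← mul_pow, h2]
  rw [sum_range_succ_add_nat_mul_pi_div, add_mul, neg_add, exp_add, hphase] at key
  apply mul_left_cancel₀ (mul_ne_zero two_ne_zero I_ne_zero)
  apply mul_right_cancel₀ (exp_ne_zero (-((k + 1) * z * I)))
  linear_combination -key + (∏ i ∈ range (k + 1), sin (θ i)) * exp (-((k + 1) * z * I)) * hpow

end Complex

theorem sin_multiple_as_product (k : ℕ) (x : ℝ) :
    Real.sin ((k + 1) * x) =
      2 ^ k * ∏ i ∈ Finset.range (k + 1), Real.sin (x + i * Real.pi / (k + 1)) := by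
  apply Complex.ofReal_injective
  push_cast
  exact Complex.sin_succ_mul_eq_two_pow_mul_prod k x
end

section
/- For every natural number k and every real x such that sin((k+1)x) ≠ 0 and sin(x + iπ/(k+1)) ≠ 0 for all 0 ≤ i ≤ k, one has (k+1)·cot((k+1)x) = ∑_{i=0}^{k} cot(x + iπ/(k+1)). -/
open Real Finset

/-! With `w = exp (2iz)` and `ζ = exp (2πi/n)`, the formula `cot θ = i - 2i / (1 - exp (2iθ))`
turns the identity into `∑_{i<n} 1 / (1 - ζ^i w) = n / (1 - w^n)`, which is the logarithmic
derivative at `1` of the factorization `X^n - w^n = ∏_{i<n} (X - ζ^i w)`. -/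

open Polynomial in
theorem IsPrimitiveRoot.sum_inv_sub_pow_mul {K : Type*} [Field K] {n : ℕ} {ζ : K}
    (hζ : IsPrimitiveRoot ζ n) {w y : K} (h : y ^ n ≠ w ^ n) :
    ∑ i ∈ range n, (y - ζ ^ i * w)⁻¹ = n * y ^ (n - 1) / (y ^ n - w ^ n) := by
  have hroots : (X ^ n - C (w ^ n)).roots = (range n).val.map (ζ ^ · * w) :=
    hζ.nthRoots_eq rfl
  have hf := (X_pow_sub_C_splits_of_isPrimitiveRoot hζ rfl)
    |>.eval_derivative_div_eval_of_ne_zero (x := y) (by simpa [sub_eq_zero] using h)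
  rw [hroots, Multiset.map_map, derivative_sub, derivative_X_pow, derivative_C] at hf
  simpa [Finset.sum, Function.comp_def] using hf.symm

theorem Complex.exp_two_mul_I_mul_ne_one {z : ℂ} (hz : Complex.sin z ≠ 0) :
    Complex.exp (2 * Complex.I * z) ≠ 1 := by
  rw [Ne, Complex.exp_eq_one_iff]
  rintro ⟨m, hm⟩
  refine hz (Complex.sin_eq_zero_iff.mpr ⟨m, mul_left_cancel₀ (two_ne_zero' ℂ) ?_⟩)
  exact mul_left_cancel₀ Complex.I_ne_zero (by linear_combination hm)

theorem Complex.cot_eq_I_sub_div {z : ℂ} (hz : Complex.sin z ≠ 0) :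
    Complex.cot z = Complex.I - 2 * Complex.I * (1 - Complex.exp (2 * Complex.I * z))⁻¹ := by
  have h := sub_ne_zero.mpr (Complex.exp_two_mul_I_mul_ne_one hz).symm
  rw [Complex.cot_eq_exp_ratio]
  field_simp
  linear_combination (1 + Complex.exp (2 * Complex.I * z)) * Complex.I_sq

theorem Complex.nat_mul_cot_nat_mul (n : ℕ) (z : ℂ) (hz : Complex.sin (n * z) ≠ 0)
    (hzi : ∀ i < n, Complex.sin (z + i * π / n) ≠ 0) :
    n * Complex.cot (n * z) = ∑ i ∈ range n, Complex.cot (z + i * π / n) := by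
  obtain rfl | hn := eq_or_ne n 0
  · simp
  set ζ := Complex.exp (2 * π * Complex.I / n)
  set w := Complex.exp (2 * Complex.I * z)
  have hexp_n : Complex.exp (2 * Complex.I * (n * z)) = w ^ n := by
    rw [← Complex.exp_nat_mul]; ring_nf
  have hexp_i (i : ℕ) : Complex.exp (2 * Complex.I * (z + i * π / n)) = ζ ^ i * w := by
    rw [← Complex.exp_nat_mul, ← Complex.exp_add]; field_simp; ring_nf
  have hwn : (1 : ℂ) ^ n ≠ w ^ n := by
    simpa [hexp_n, eq_comm] using Complex.exp_two_mul_I_mul_ne_one hz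
  calc (n : ℂ) * Complex.cot (n * z)
      = n * Complex.I - 2 * Complex.I * ∑ i ∈ range n, (1 - ζ ^ i * w)⁻¹ := by
        rw [Complex.cot_eq_I_sub_div hz, hexp_n,
          (Complex.isPrimitiveRoot_exp n hn).sum_inv_sub_pow_mul hwn]
        simp only [one_pow]
        ring
    _ = ∑ i ∈ range n, (Complex.I - 2 * Complex.I * (1 - ζ ^ i * w)⁻¹) := by
        rw [sum_sub_distrib, sum_const, card_range, nsmul_eq_mul, mul_sum]
    _ = ∑ i ∈ range n, Complex.cot (z + i * π / n) := sum_congr rfl fun i hi => by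
        rw [Complex.cot_eq_I_sub_div (hzi i (mem_range.mp hi)), hexp_i]

theorem cot_multiple_sum (k : ℕ) (x : ℝ)
    (hx : Real.sin ((k + 1) * x) ≠ 0)
    (hxi : ∀ i : ℕ, i ≤ k → Real.sin (x + i * Real.pi / (k + 1)) ≠ 0) :
    (k + 1) * Real.cot ((k + 1) * x) =
      ∑ i ∈ Finset.range (k + 1), Real.cot (x + i * Real.pi / (k + 1)) := by
  apply Complex.ofReal_injective
  have h := Complex.nat_mul_cot_nat_mul (k + 1) x (by exact_mod_cast hx)
    fun i hi => by exact_mod_cast hxi i (Nat.lt_succ_iff.mp hi)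
  push_cast [Complex.ofReal_cot] at h ⊢
  exact h
end

section
/- For every natural number k and every real x such that sin((k+1)x) ≠ 0 and sin(x + iπ/(k+1)) ≠ 0 for all 0 ≤ i ≤ k, one has (k+1)^2·cot^2((k+1)x) + (k+1)k = ∑_{i=0}^{k} cot^2(x + iπ/(k+1)). -/
/-!
Put `w = exp (2 i x)`, so that `cot x = i (w + 1) / (w - 1)`, and let `ζ` be a primitive `n`-th
root of unity, `n = k + 1`. The points `x + j π / n` correspond to `w ζ ^ j`, the `n` roots `W` of
`W ^ n = c := w ^ n`. For such `W`, `u = (W - 1)⁻¹` equals `(1 + W + ⋯ + W ^ (n - 1)) / (c - 1)`,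
and `(c - 1) u ^ 2 - (n c - c + 1) u = -∑_{m < n} m W ^ m` has no constant term. Summing over
the roots kills every power `W ^ m` with `0 < m < n`, which gives `∑ u = n / (c - 1)` and
`∑ u ^ 2 = n (n c - c + 1) / (c - 1) ^ 2`; the identity is then algebra in `c`.
-/

open Real Finset

section GeomSum

variable {K : Type*} [Field K] {n : ℕ} {w : K}

theorem sub_one_mul_sum_range_nat_mul_pow {R : Type*} [CommRing R] (w : R) (n : ℕ) :
    (w - 1) * ∑ m ∈ range n, (m : R) * w ^ m = n * w ^ n - w * ∑ m ∈ range n, w ^ m := by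
  induction n with
  | zero => simp
  | succ n ih =>
    rw [sum_range_succ, sum_range_succ, mul_add, ih]
    push_cast
    ring

theorem sub_one_ne_zero_of_pow_ne_one (hw : w ^ n ≠ 1) : w - 1 ≠ 0 := by
  rintro h
  rw [sub_eq_zero.mp h, one_pow] at hw
  exact hw rfl

theorem inv_sub_one_eq_geom_sum_div (hw : w ^ n ≠ 1) :
    (w - 1)⁻¹ = (∑ m ∈ range n, w ^ m) / (w ^ n - 1) := by
  rw [eq_div_iff (sub_ne_zero.mpr hw), ← geom_sum_mul, mul_comm,
    mul_inv_cancel_right₀ (sub_one_ne_zero_of_pow_ne_one hw)]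

theorem sub_one_mul_inv_sub_one_sq (hw : w ^ n ≠ 1) :
    (w ^ n - 1) * (w - 1)⁻¹ ^ 2 =
      (n * w ^ n - w ^ n + 1) * (w - 1)⁻¹ - ∑ m ∈ range n, (m : K) * w ^ m := by
  set u := (w - 1)⁻¹
  have hu : (w - 1) * u = 1 := mul_inv_cancel₀ (sub_one_ne_zero_of_pow_ne_one hw)
  have hS := geom_sum_mul w n
  have hT := sub_one_mul_sum_range_nat_mul_pow w n
  linear_combination ((∑ m ∈ range n, w ^ m) * u - ∑ m ∈ range n, (m : K) * w ^ m) * hu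
    - (u ^ 2 + u) * hS + u * hT

end GeomSum

namespace IsPrimitiveRoot

variable {K : Type*} [Field K] {n : ℕ} {ζ : K} (hζ : IsPrimitiveRoot ζ n) (w : K)
include hζ

theorem mul_pow_pow (i : ℕ) : (w * ζ ^ i) ^ n = w ^ n := by
  rw [mul_pow, ← pow_mul, mul_comm i, pow_mul, hζ.pow_eq_one, one_pow, mul_one]

theorem sum_range_mul_pow_pow_eq_zero {m : ℕ} (hm : ¬ n ∣ m) :
    ∑ i ∈ range n, (w * ζ ^ i) ^ m = 0 := by
  have hζm : ζ ^ m ≠ 1 := fun h => hm ((hζ.pow_eq_one_iff_dvd m).mp h)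
  simp_rw [mul_pow, ← pow_mul, mul_comm _ m, pow_mul, ← mul_sum,
    geom_sum_eq hζm, ← pow_mul, mul_comm m, pow_mul, hζ.pow_eq_one, one_pow]
  simp

theorem sum_range_sum_range_mul_pow (a : ℕ → K) :
    ∑ i ∈ range n, ∑ m ∈ range n, a m * (w * ζ ^ i) ^ m = n * a 0 := by
  rcases n.eq_zero_or_pos with rfl | hn
  · simp
  rw [sum_comm, sum_eq_single_of_mem 0 (mem_range.mpr hn)]
  · simp
  · intro m hm hm0
    rw [← mul_sum, hζ.sum_range_mul_pow_pow_eq_zero w, mul_zero]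
    exact Nat.not_dvd_of_pos_of_lt (Nat.pos_of_ne_zero hm0) (mem_range.mp hm)

variable {w}

theorem sum_inv_mul_pow_sub_one (hw : w ^ n ≠ 1) :
    ∑ i ∈ range n, (w * ζ ^ i - 1)⁻¹ = n / (w ^ n - 1) := by
  have h := hζ.sum_range_sum_range_mul_pow w fun _ => 1
  simp only [one_mul, mul_one] at h
  simp_rw [inv_sub_one_eq_geom_sum_div ((hζ.mul_pow_pow w _).symm ▸ hw), hζ.mul_pow_pow,
    ← sum_div, h]

theorem sum_inv_mul_pow_sub_one_sq (hw : w ^ n ≠ 1) :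
    ∑ i ∈ range n, (w * ζ ^ i - 1)⁻¹ ^ 2 = n * (n * w ^ n - w ^ n + 1) / (w ^ n - 1) ^ 2 := by
  have h := hζ.sum_range_sum_range_mul_pow w fun m => (m : K)
  simp only [Nat.cast_zero, mul_zero] at h
  have hterm (i : ℕ) := hζ.mul_pow_pow w i ▸
    sub_one_mul_inv_sub_one_sq (n := n) (w := w * ζ ^ i) ((hζ.mul_pow_pow w i).symm ▸ hw)
  have key : (w ^ n - 1) * ∑ i ∈ range n, (w * ζ ^ i - 1)⁻¹ ^ 2 =
      (n * w ^ n - w ^ n + 1) * (n / (w ^ n - 1)) := by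
    rw [mul_sum, sum_congr rfl fun i _ => hterm i, sum_sub_distrib, ← mul_sum,
      hζ.sum_inv_mul_pow_sub_one hw, h, sub_zero]
  rw [sq, ← div_div, eq_div_iff (sub_ne_zero.mpr hw), mul_comm, key]
  ring

theorem sum_add_one_div_sub_one_sq (hw : w ^ n ≠ 1) :
    ∑ i ∈ range n, ((w * ζ ^ i + 1) / (w * ζ ^ i - 1)) ^ 2 =
      n ^ 2 * ((w ^ n + 1) / (w ^ n - 1)) ^ 2 - n * (n - 1) := by
  have hexpand (v : K) (hv : v - 1 ≠ 0) :
      ((v + 1) / (v - 1)) ^ 2 = 1 + 4 * (v - 1)⁻¹ + 4 * (v - 1)⁻¹ ^ 2 := by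
    field_simp
    ring
  rw [sum_congr rfl fun i _ =>
      hexpand _ (sub_one_ne_zero_of_pow_ne_one ((hζ.mul_pow_pow w i).symm ▸ hw)),
    sum_add_distrib, sum_add_distrib, ← mul_sum, ← mul_sum, hζ.sum_inv_mul_pow_sub_one hw,
    hζ.sum_inv_mul_pow_sub_one_sq hw]
  simp only [sum_const, card_range, nsmul_eq_mul, mul_one]
  field_simp
  ring

end IsPrimitiveRoot

namespace Complex

theorem cot_eq_I_mul_exp_ratio (z : ℂ) :
    cot z = I * ((exp (2 * I * z) + 1) / (exp (2 * I * z) - 1)) := by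
  rw [cot_eq_exp_ratio, ← neg_sub, mul_neg, div_neg, ← div_div, div_I]
  ring

theorem cot_sq_eq_neg_exp_ratio_sq (z : ℂ) :
    cot z ^ 2 = -((exp (2 * I * z) + 1) / (exp (2 * I * z) - 1)) ^ 2 := by
  rw [cot_eq_I_mul_exp_ratio, mul_pow, I_sq, neg_one_mul]

theorem exp_two_mul_I_mul_ne_one_s2 {x : ℝ} (hx : Real.sin x ≠ 0) : exp (2 * I * x) ≠ 1 := by
  rw [Ne, exp_eq_one_iff]
  rintro ⟨m, hm⟩
  refine hx (Real.sin_eq_zero_iff.mpr ⟨m, ofReal_injective ?_⟩)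
  push_cast
  linear_combination (I / 2) * hm + (m * π - x : ℂ) * I_sq

end Complex

theorem cot_sq_multiple_sum_general (k : ℕ) (x : ℝ)
    (hx : Real.sin ((k + 1) * x) ≠ 0) :
    (k + 1) ^ 2 * (Real.cot ((k + 1) * x)) ^ 2 + (k + 1) * k =
      ∑ i ∈ Finset.range (k + 1), (Real.cot (x + i * Real.pi / (k + 1))) ^ 2 := by
  set w := Complex.exp (2 * Complex.I * x)
  set ζ := Complex.exp (2 * π * Complex.I / (k + 1 : ℕ))
  have hζ : IsPrimitiveRoot ζ (k + 1) := Complex.isPrimitiveRoot_exp _ k.succ_ne_zero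
  have hwn : Complex.exp (2 * Complex.I * ((k + 1) * x)) = w ^ (k + 1) := by
    rw [← Complex.exp_nat_mul]
    congr 1
    push_cast
    ring
  have hwi (i : ℕ) : Complex.exp (2 * Complex.I * (x + i * π / (k + 1))) = w * ζ ^ i := by
    rw [← Complex.exp_nat_mul, ← Complex.exp_add]
    push_cast
    field_simp
  have hw : w ^ (k + 1) ≠ 1 := by
    rw [← hwn]
    exact_mod_cast Complex.exp_two_mul_I_mul_ne_one_s2 hx
  apply Complex.ofReal_injective
  push_cast
  simp_rw [Complex.cot_sq_eq_neg_exp_ratio_sq, hwn, hwi, sum_neg_distrib,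
    hζ.sum_add_one_div_sub_one_sq hw]
  push_cast
  ring

theorem cot_sq_multiple_sum (k : ℕ) (x : ℝ)
    (hx : Real.sin ((k + 1) * x) ≠ 0)
    (hxi : ∀ i : ℕ, i ≤ k → Real.sin (x + i * Real.pi / (k + 1)) ≠ 0) :
    (k + 1) ^ 2 * (Real.cot ((k + 1) * x)) ^ 2 + (k + 1) * k =
      ∑ i ∈ Finset.range (k + 1), (Real.cot (x + i * Real.pi / (k + 1))) ^ 2 :=
  cot_sq_multiple_sum_general k x hx
end

section
/- For every integer k ≥ 2, the eta invariant of the lens space L(k^2-1, k), given by η = -(1/(k^2-1)) ∑_{i=1}^{k^2-2} cot(iπ/(k^2-1)) cot(kiπ/(k^2-1)), equals -(1/(k^2-1)) · ((2/3)k^3 - 2k^2 + 2). -/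
/-!
With `p = k² - 1`, the sum is `4 p` times the Dedekind sum `s(k, p)`. Indeed, the finite Fourier
expansion `cot (π a / p) = 2 i ∑_{m < p} ((m / p)) ζ ^ (a m)`, `ζ = exp (2 π i / p)`, together with the
orthogonality of the characters `i ↦ ζ ^ (c i)` of `ℤ / p`, turns `∑_i cot (π i / p) cot (π k i / p)`
into `4 p ∑_n ((n / p)) ((k n / p))`. Since `k² ≡ 1 (mod p)`, writing `n = q k + r` with `q, r < k`
gives `k n ≡ q + r k`, so `s(k, p)` is an explicit polynomial double sum over `q, r < k`; centring
`q` and `r` at `(k - 1) / 2` kills its cross terms and gives `s(k, p) = k³ / (6 p) - 1 / 2`.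
-/

open Real Finset


/-- The eta invariant of the lens space `L(k²-1, k)`, defined by the
Atiyah–Patodi–Singer formula. -/
noncomputable def etaLens (k : ℕ) : ℝ :=
  -(1 / ((k : ℝ) ^ 2 - 1)) *
    ∑ i ∈ Finset.Icc (1 : ℕ) (k ^ 2 - 2),
      Real.cot ((i : ℝ) * Real.pi / ((k : ℝ) ^ 2 - 1)) * Real.cot ((k : ℝ) * (i : ℝ) * Real.pi / ((k : ℝ) ^ 2 - 1))

-- Dedekind's `((x))`.
noncomputable def sawtooth (x : ℝ) : ℝ := if Int.fract x = 0 then 0 else Int.fract x - 1 / 2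

noncomputable def dedekindSum (h : ℤ) (p : ℕ) : ℝ :=
  ∑ n ∈ range p, sawtooth (n / p) * sawtooth (h * n / p)

@[simp] lemma sawtooth_zero : sawtooth 0 = 0 := by
  simp [sawtooth]

@[simp] lemma sawtooth_add_intCast (x : ℝ) (n : ℤ) : sawtooth (x + n) = sawtooth x := by
  simp only [sawtooth, Int.fract_add_intCast]

lemma sawtooth_of_pos_of_lt_one {x : ℝ} (h0 : 0 < x) (h1 : x < 1) : sawtooth x = x - 1 / 2 := by
  have hx : Int.fract x = x := Int.fract_eq_self.2 ⟨h0.le, h1⟩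
  simp [sawtooth, hx, h0.ne']

lemma sawtooth_natCast_div {m p : ℕ} (hm : 0 < m) (hmp : m < p) :
    sawtooth (m / p) = m / p - 1 / 2 := by
  have hp : (0 : ℝ) < p := by exact_mod_cast hm.trans hmp
  apply sawtooth_of_pos_of_lt_one (by positivity)
  rw [div_lt_one hp]
  exact_mod_cast hmp

lemma periodic_sawtooth_intCast_div {p : ℕ} (hp : p ≠ 0) :
    Function.Periodic (fun m : ℤ => (sawtooth (m / p) : ℂ)) p := by
  intro m
  have hp' : (p : ℝ) ≠ 0 := Nat.cast_ne_zero.2 hp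
  simp only [Int.cast_add, Int.cast_natCast]
  rw [add_div, div_self hp', ← Int.cast_one, sawtooth_add_intCast]

lemma sum_range_natCast_mul_two {R : Type*} [CommRing R] (n : ℕ) :
    (∑ i ∈ range n, (i : R)) * 2 = n * (n - 1) := by
  induction n with
  | zero => simp
  | succ n ih => rw [sum_range_succ, add_mul, ih]; push_cast; ring

lemma sum_range_natCast_sq_mul_six {R : Type*} [CommRing R] (n : ℕ) :
    (∑ i ∈ range n, (i : R) ^ 2) * 6 = n * (n - 1) * (2 * n - 1) := by
  induction n with
  | zero => simp
  | succ n ih => rw [sum_range_succ, add_mul, ih]; push_cast; ring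

lemma Finset.sum_range_mul_eq_sum_sum {M : Type*} [AddCommMonoid M] (f : ℕ → M) (a b : ℕ) :
    ∑ n ∈ range (a * b), f n = ∑ q ∈ range a, ∑ r ∈ range b, f (q * b + r) := by
  induction a with
  | zero => simp
  | succ a ih => rw [sum_range_succ, ← ih, Nat.succ_mul, sum_range_add]

lemma Function.Periodic.sum_range_ite_dvd_sub {M : Type*} [AddCommMonoid M] {f : ℤ → M}
    {p : ℕ} (hf : Function.Periodic f p) (hp : p ≠ 0) (c : ℤ) :
    ∑ m ∈ range p, (if (p : ℤ) ∣ c - m then f m else 0) = f c := by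
  have hp' : (0 : ℤ) < p := by exact_mod_cast Nat.pos_of_ne_zero hp
  have hr : ((c % p).toNat : ℤ) = c % p := Int.toNat_of_nonneg (Int.emod_nonneg c hp'.ne')
  rw [sum_eq_single (c % p).toNat]
  · rw [if_pos (by rw [hr]; exact (Int.mod_modEq c p).dvd), hr, Int.emod_def, mul_comm]
    exact hf.sub_int_mul_eq (c / p)
  · intro m hm hne
    rw [if_neg]
    intro hdvd
    apply hne
    have hmod : (m : ℤ) % p = c % p := Int.modEq_iff_dvd.2 hdvd
    rw [Int.emod_eq_of_lt (by positivity) (by exact_mod_cast mem_range.1 hm)] at hmod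
    omega
  · intro hmem
    exact absurd (mem_range.2 (by have := Int.emod_lt_of_pos c hp'; omega)) hmem

lemma sub_one_mul_sum_range_mul_pow {R : Type*} [CommRing R] (x : R) (n : ℕ) :
    (x - 1) * ∑ m ∈ range n, (m : R) * x ^ m = n * x ^ n - ∑ m ∈ range n, x ^ (m + 1) := by
  induction n with
  | zero => simp
  | succ n ih =>
    rw [sum_range_succ, mul_add, ih, sum_range_succ]
    push_cast
    ring

lemma sub_one_mul_sum_range_mul_pow_of_pow_eq_one {K : Type*} [Field K] {x : K} {n : ℕ}
    (hx : x ^ n = 1) (hx1 : x ≠ 1) : (x - 1) * ∑ m ∈ range n, (m : K) * x ^ m = n := by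
  have hgeom : ∑ m ∈ range n, x ^ m = 0 := by
    rw [geom_sum_eq hx1, hx, sub_self, zero_div]
  simp only [sub_one_mul_sum_range_mul_pow, hx, pow_succ, ← sum_mul, hgeom]
  ring

lemma IsPrimitiveRoot.zpow_pow_eq_one {K : Type*} [Field K] {ζ : K} {p : ℕ}
    (hζ : IsPrimitiveRoot ζ p) (c : ℤ) : (ζ ^ c) ^ p = 1 := by
  rw [← zpow_natCast, ← zpow_mul, mul_comm, zpow_mul, zpow_natCast, hζ.pow_eq_one, one_zpow]

lemma IsPrimitiveRoot.sum_range_zpow_pow {K : Type*} [Field K] {ζ : K} {p : ℕ}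
    (hζ : IsPrimitiveRoot ζ p) (c : ℤ) :
    ∑ i ∈ range p, (ζ ^ c) ^ i = if (p : ℤ) ∣ c then (p : K) else 0 := by
  split_ifs with h
  · simp [(hζ.zpow_eq_one_iff_dvd c).2 h]
  · rw [geom_sum_eq (mt (hζ.zpow_eq_one_iff_dvd c).1 h), hζ.zpow_pow_eq_one, sub_self, zero_div]

lemma sum_range_sawtooth_mul_pow {p : ℕ} (hp : p ≠ 0) (x : ℂ) :
    ∑ m ∈ range p, (sawtooth (m / p) : ℂ) * x ^ m
      = (p : ℂ)⁻¹ * ∑ m ∈ range p, (m : ℂ) * x ^ m - (∑ m ∈ range p, x ^ m - 1) / 2 := by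
  rw [mul_sum, sum_range_eq_add_Ico _ (Nat.pos_of_ne_zero hp),
    sum_range_eq_add_Ico _ (Nat.pos_of_ne_zero hp), sum_range_eq_add_Ico _ (Nat.pos_of_ne_zero hp)]
  have hterm : ∀ m ∈ Ico 1 p, (sawtooth (m / p) : ℂ) * x ^ m
      = (p : ℂ)⁻¹ * ((m : ℂ) * x ^ m) - x ^ m / 2 := by
    intro m hm
    rw [mem_Ico] at hm
    rw [sawtooth_natCast_div hm.1 hm.2]
    push_cast
    ring
  rw [sum_congr rfl hterm, sum_sub_distrib, ← sum_div]
  simp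

-- This holds also for `p ∣ a`: then both sides vanish, `Real.cot` being `0` at multiples of `π`.
lemma ofReal_cot_int_mul_pi_div_eq_sum_sawtooth {p : ℕ} (hp : p ≠ 0) (a : ℤ) :
    (Real.cot (a * π / p) : ℂ)
      = 2 * Complex.I * ∑ m ∈ range p,
          (sawtooth (m / p) : ℂ) * (Complex.exp (2 * π * Complex.I / p) ^ a) ^ m := by
  have hζ := Complex.isPrimitiveRoot_exp p hp
  have hx : Complex.exp (2 * Complex.I * ((a * π / p : ℝ) : ℂ))
      = Complex.exp (2 * π * Complex.I / p) ^ a := by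
    rw [← Complex.exp_int_mul]
    congr 1
    push_cast
    ring
  rw [Complex.ofReal_cot, Complex.cot_eq_exp_ratio, hx, sum_range_sawtooth_mul_pow hp,
    hζ.sum_range_zpow_pow]
  set x := Complex.exp (2 * π * Complex.I / p) ^ a
  by_cases hx1 : x = 1
  · have hgauss : ∑ m ∈ range p, (m : ℂ) = p * (p - 1) / 2 := by
      rw [eq_div_iff two_ne_zero, sum_range_natCast_mul_two]
    simp [hx1, hgauss, (hζ.zpow_eq_one_iff_dvd a).1 hx1]
    field_simp
    ring
  · have hS : (x - 1) * ∑ m ∈ range p, (m : ℂ) * x ^ m = p :=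
      sub_one_mul_sum_range_mul_pow_of_pow_eq_one (hζ.zpow_pow_eq_one a) hx1
    rw [if_neg (mt (hζ.zpow_eq_one_iff_dvd a).2 hx1)]
    field_simp
    rw [Complex.I_sq]
    linear_combination (-2) * hS

lemma ofReal_cot_mul_cot_eq_sum_sum {p : ℕ} (hp : p ≠ 0) (h : ℤ) (i : ℕ) :
    ((Real.cot (i * π / p) * Real.cot (h * i * π / p) : ℝ) : ℂ)
      = 4 * ∑ m ∈ range p, ∑ n ∈ range p, (sawtooth (m / p) : ℂ) * sawtooth (n / p)
          * (Complex.exp (2 * π * Complex.I / p) ^ (h * n - m)) ^ i := by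
  set ζ := Complex.exp (2 * π * Complex.I / p)
  have hζ : IsPrimitiveRoot ζ p := Complex.isPrimitiveRoot_exp p hp
  set s : ℕ → ℂ := fun m => (sawtooth (m / p) : ℂ)
  have h1 : Real.cot (i * π / p) = -Real.cot ((-i : ℤ) * π / p) := by
    push_cast
    rw [neg_mul, neg_div, Real.cot_eq_cos_div_sin, Real.cot_eq_cos_div_sin, Real.cos_neg,
      Real.sin_neg, div_neg, neg_neg]
  have h2 : Real.cot (h * i * π / p) = Real.cot ((h * i : ℤ) * π / p) := by push_cast; rfl
  rw [h1, h2, Complex.ofReal_mul, Complex.ofReal_neg,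
    ofReal_cot_int_mul_pi_div_eq_sum_sawtooth hp, ofReal_cot_int_mul_pi_div_eq_sum_sawtooth hp]
  show -(2 * Complex.I * ∑ m ∈ range p, s m * (ζ ^ (-(i : ℤ))) ^ m)
    * (2 * Complex.I * ∑ n ∈ range p, s n * (ζ ^ (h * i)) ^ n) = _
  set A := ∑ m ∈ range p, s m * (ζ ^ (-(i : ℤ))) ^ m
  set B := ∑ n ∈ range p, s n * (ζ ^ (h * i)) ^ n
  rw [show -(2 * Complex.I * A) * (2 * Complex.I * B) = 4 * (A * B) by
    linear_combination (-4 * A * B) * Complex.I_sq, sum_mul_sum]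
  refine congrArg _ (sum_congr rfl fun m _ => sum_congr rfl fun n _ => ?_)
  have hexp : (ζ ^ (-(i : ℤ))) ^ m * (ζ ^ (h * i)) ^ n = (ζ ^ (h * n - m)) ^ i := by
    simp only [← zpow_natCast, ← zpow_mul, ← zpow_add₀ (hζ.ne_zero hp)]
    ring_nf
  rw [← hexp]
  ring

theorem sum_cot_mul_cot_eq_dedekindSum (h : ℤ) (p : ℕ) :
    ∑ i ∈ range p, Real.cot (i * π / p) * Real.cot (h * i * π / p) = 4 * p * dedekindSum h p := by
  rcases eq_or_ne p 0 with rfl | hp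
  · simp [dedekindSum]
  apply Complex.ofReal_injective
  rw [Complex.ofReal_sum, sum_congr rfl fun i _ => ofReal_cot_mul_cot_eq_sum_sum hp h i,
    ← mul_sum, sum_comm]
  set ζ := Complex.exp (2 * π * Complex.I / p)
  have hζ : IsPrimitiveRoot ζ p := Complex.isPrimitiveRoot_exp p hp
  set s : ℕ → ℂ := fun m => (sawtooth (m / p) : ℂ)
  calc 4 * ∑ m ∈ range p, ∑ i ∈ range p, ∑ n ∈ range p, s m * s n * (ζ ^ (h * n - m)) ^ i
      = 4 * ∑ m ∈ range p, ∑ n ∈ range p, s m * s n * ∑ i ∈ range p, (ζ ^ (h * n - m)) ^ i := by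
        refine congrArg _ (sum_congr rfl fun m _ => ?_)
        rw [sum_comm]
        simp only [mul_sum]
    _ = 4 * p * ∑ n ∈ range p, s n * ∑ m ∈ range p,
          (if (p : ℤ) ∣ h * n - m then (sawtooth ((m : ℤ) / p) : ℂ) else 0) := by
        simp only [hζ.sum_range_zpow_pow, mul_sum]
        rw [sum_comm]
        refine sum_congr rfl fun n _ => sum_congr rfl fun m _ => ?_
        split_ifs
        · simp only [s, Int.cast_natCast]
          ring
        · simp
    _ = _ := by
        simp only [(periodic_sawtooth_intCast_div hp).sum_range_ite_dvd_sub hp, dedekindSum]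
        push_cast
        rfl

lemma sum_range_sum_range_div_sub_half_mul_div_sub_half {k : ℕ} {p : ℝ}
    (hkp : (k : ℝ) ^ 2 = p + 1) (hp : p ≠ 0) :
    ∑ q ∈ range k, ∑ r ∈ range k, ((q * k + r) / p - 1 / 2) * ((q + r * k) / p - 1 / 2)
      = k ^ 3 / (6 * p) := by
  set u : ℕ → ℝ := fun q => q - ((k : ℝ) - 1) / 2
  have hu : ∑ q ∈ range k, u q = 0 := by
    have := sum_range_natCast_mul_two (R := ℝ) k
    simp only [u, sum_sub_distrib, sum_const, card_range, nsmul_eq_mul]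
    linear_combination this / 2
  have hu2 : ∑ q ∈ range k, u q ^ 2 = k * p / 12 := by
    have h1 := sum_range_natCast_mul_two (R := ℝ) k
    have h2 := sum_range_natCast_sq_mul_six (R := ℝ) k
    simp only [u, sub_sq, sum_add_distrib, sum_sub_distrib, sum_const, card_range, nsmul_eq_mul,
      ← sum_mul, ← mul_sum]
    linear_combination h2 / 6 - ((k : ℝ) - 1) / 2 * h1 + k / 12 * hkp
  -- `(q k + r) / p - 1 / 2 = (k u q + u r) / p`, because `p = k ^ 2 - 1`
  calc ∑ q ∈ range k, ∑ r ∈ range k, ((q * k + r) / p - 1 / 2) * ((q + r * k) / p - 1 / 2)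
      = ∑ q ∈ range k, ∑ r ∈ range k,
          (k * u q ^ 2 + ((k : ℝ) ^ 2 + 1) * (u q * u r) + k * u r ^ 2) / p ^ 2 :=
        sum_congr rfl fun q _ => sum_congr rfl fun r _ => by
          obtain rfl : p = k ^ 2 - 1 := by linarith
          simp only [u]
          field_simp
          ring
    _ = (2 * k * k * ∑ q ∈ range k, u q ^ 2
          + ((k : ℝ) ^ 2 + 1) * ((∑ q ∈ range k, u q) * ∑ r ∈ range k, u r)) / p ^ 2 := by
        simp only [← sum_div, sum_add_distrib, ← mul_sum, sum_const, card_range, nsmul_eq_mul,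
          ← sum_mul]
        ring
    _ = k ^ 3 / (6 * p) := by
        rw [hu, hu2]
        field_simp
        ring

section SquareMinusOne

variable {k p : ℕ}

lemma sawtooth_mul_sawtooth_of_sq_eq_succ (hkp : k ^ 2 = p + 1) {q r : ℕ}
    (hr : r < k) (h0 : 0 < q * k + r) (hlt : q * k + r < p) :
    sawtooth (((q * k + r : ℕ) : ℝ) / p) * sawtooth ((k : ℤ) * ((q * k + r : ℕ) : ℝ) / p)
      = (((q : ℝ) * k + r) / p - 1 / 2) * (((q : ℝ) + r * k) / p - 1 / 2) := by
  have hp : (p : ℝ) ≠ 0 := Nat.cast_ne_zero.2 (by omega)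
  have hb0 : 0 < q + r * k := by nlinarith
  have hblt : q + r * k < p := by nlinarith
  have hkn : (k : ℤ) * ((q * k + r : ℕ) : ℝ) / p = ((q + r * k : ℕ) : ℝ) / p + (q : ℤ) := by
    have hkpR : (k : ℝ) ^ 2 = p + 1 := by exact_mod_cast hkp
    field_simp
    push_cast
    linear_combination (q : ℝ) * hkpR
  rw [hkn, sawtooth_add_intCast, sawtooth_natCast_div h0 hlt, sawtooth_natCast_div hb0 hblt]
  push_cast
  ring

lemma dedekindSum_eq_sum_sum_sub_half (hkp : k ^ 2 = p + 1) (hp : p ≠ 0) :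
    dedekindSum k p
      = ∑ q ∈ range k, ∑ r ∈ range k,
          (((q : ℝ) * k + r) / p - 1 / 2) * (((q : ℝ) + r * k) / p - 1 / 2) - 1 / 2 := by
  set G : ℕ → ℕ → ℝ := fun q r => ((q * k + r) / p - 1 / 2) * ((q + r * k) / p - 1 / 2)
  set H : ℕ → ℝ := fun n => G (n / k) (n % k)
  have hk : 0 < k := by nlinarith
  have hH : ∀ q r, r < k → H (q * k + r) = G q r := by
    intro q r hr
    simp only [H, Nat.mul_add_mod_self_right, Nat.mod_eq_of_lt hr]
    rw [add_comm, Nat.add_mul_div_right _ _ hk, Nat.div_eq_of_lt hr, zero_add]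
  have hp_corner : (k - 1) * k + (k - 1) = p := by
    obtain ⟨j, rfl⟩ := Nat.exists_eq_succ_of_ne_zero hk.ne'
    rw [Nat.succ_sub_one]
    linarith
  have hH_zero : H 0 = 1 / 4 := by
    simp only [H, G, Nat.zero_div, Nat.zero_mod]
    norm_num
  have hH_p : H p = 1 / 4 := by
    have hpR : ((k - 1 : ℕ) : ℝ) * k + (k - 1 : ℕ) = p := by exact_mod_cast hp_corner
    have hpR' : ((k - 1 : ℕ) : ℝ) + (k - 1 : ℕ) * k = p := by linarith
    have hp0 : (p : ℝ) ≠ 0 := Nat.cast_ne_zero.2 hp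
    rw [← hp_corner, hH _ _ (Nat.sub_lt hk one_pos)]
    simp only [G, hpR, hpR', div_self hp0]
    norm_num
  calc dedekindSum k p = ∑ n ∈ Ico 1 p, H n := by
        rw [dedekindSum, sum_range_eq_add_Ico _ (Nat.pos_of_ne_zero hp)]
        simp only [Nat.cast_zero, zero_div, sawtooth_zero, zero_mul, zero_add]
        refine sum_congr rfl fun n hn => ?_
        rw [mem_Ico] at hn
        obtain ⟨q, r, hr, rfl⟩ : ∃ q r, r < k ∧ n = q * k + r :=
          ⟨n / k, n % k, Nat.mod_lt _ hk, (Nat.div_add_mod' n k).symm⟩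
        rw [hH q r hr, sawtooth_mul_sawtooth_of_sq_eq_succ hkp hr hn.1 hn.2]
    _ = ∑ n ∈ range (k * k), H n - H 0 - H p := by
        rw [← sq, hkp, sum_range_succ, sum_range_eq_add_Ico _ (Nat.pos_of_ne_zero hp)]
        ring
    _ = _ := by
        rw [sum_range_mul_eq_sum_sum, hH_zero, hH_p]
        rw [sum_congr rfl fun q _ => sum_congr rfl fun r (hr : r ∈ range k) =>
          hH q r (mem_range.1 hr)]
        ring

end SquareMinusOne

lemma natCast_sq_sub_one {k : ℕ} (hk : 1 ≤ k) : ((k ^ 2 - 1 : ℕ) : ℝ) = (k : ℝ) ^ 2 - 1 := by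
  rw [Nat.cast_sub (Nat.one_le_pow _ _ hk)]
  push_cast
  ring

theorem dedekindSum_sq_sub_one {k : ℕ} (hk : 2 ≤ k) :
    dedekindSum k (k ^ 2 - 1) = k ^ 3 / (6 * ((k : ℝ) ^ 2 - 1)) - 1 / 2 := by
  have hkp : k ^ 2 = (k ^ 2 - 1) + 1 := (Nat.sub_add_cancel (Nat.one_le_pow _ _ (by omega))).symm
  have hp : k ^ 2 - 1 ≠ 0 := by nlinarith
  have hpR := natCast_sq_sub_one (k := k) (by omega)
  rw [dedekindSum_eq_sum_sum_sub_half hkp hp,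
    sum_range_sum_range_div_sub_half_mul_div_sub_half (by rw [hpR]; ring) (by exact_mod_cast hp),
    hpR]

theorem eta_lens_formula (k : ℕ) (hk : 2 ≤ k) :
    etaLens k = -(1 / ((k : ℝ) ^ 2 - 1)) * ((2 / 3) * (k : ℝ) ^ 3 - 2 * (k : ℝ) ^ 2 + 2) := by
  have hpR := natCast_sq_sub_one (k := k) (by omega)
  have hrange : range (k ^ 2 - 1) = insert 0 (Icc 1 (k ^ 2 - 2)) := by
    have : 4 ≤ k ^ 2 := by nlinarith
    ext i
    simp only [mem_range, mem_insert, mem_Icc]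
    omega
  have hcot : Real.cot 0 = 0 := by simp [Real.cot_eq_cos_div_sin]
  have hsum := sum_cot_mul_cot_eq_dedekindSum k (k ^ 2 - 1)
  rw [hrange, sum_insert (by simp), hpR, dedekindSum_sq_sub_one hk] at hsum
  simp only [CharP.cast_eq_zero, zero_mul, zero_div, hcot, zero_add, Int.cast_natCast] at hsum
  have hp : (k : ℝ) ^ 2 - 1 ≠ 0 := by
    have : (2 : ℝ) ≤ k := by exact_mod_cast hk
    nlinarith
  rw [etaLens, hsum]
  field_simp
  ring
end

section
/- Let m, n be integers and k ∈ {1,2,3,4,5} with 2m² − n² = −k. If (2m(1+x) + nx)/√(1+2x+x²/2) → 0 along a sequence x_i ∈ [A, B] with 0 < A ≤ B fixed, then one reaches a contradiction: no such integers m, n exist with m ≠ 0 satisfying the limit, and m = 0 forces n = 0 contradicting n² = k. -/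
open Filter

lemma num_bound_aux (m n k : ℤ) (hk1 : 1 ≤ k) (hk5 : k ≤ 5)
    (hmn : 2 * m ^ 2 - n ^ 2 = -k)
    (A : ℝ) (hA : 0 < A) (x : ℝ) (hx1 : A ≤ x) :
    min A 2 ≤ |2 * (m : ℝ) * (1 + x) + (n : ℝ) * x| := by
  have hx0 : 0 < x := lt_of_lt_of_le hA hx1
  have hrw : 2 * (m : ℝ) * (1 + x) + (n : ℝ) * x
      = 2 * (m : ℝ) + ((2 * m + n : ℤ) : ℝ) * x := by push_cast; ring
  rw [hrw]
  rcases eq_or_ne m 0 with hm | hm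
  · subst hm
    have hn : n ≠ 0 := by intro h; subst h; omega
    have hn1 : (1 : ℝ) ≤ |(n : ℝ)| := by
      exact_mod_cast Int.one_le_abs (by omega)
    have : A ≤ |((0 + n : ℤ) : ℝ) * x| := by
      rw [abs_mul, abs_of_pos hx0]
      push_cast
      calc A = 1 * A := (one_mul A).symm
        _ ≤ |(n : ℝ)| * x := by
            apply mul_le_mul hn1 hx1 (le_of_lt hA) (le_trans zero_le_one hn1)
        _ = |(0 : ℝ) + (n : ℝ)| * x := by norm_num
    simpa using le_trans (min_le_left A 2) this
  · refine le_trans (min_le_right A 2) ?_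
    rcases lt_or_gt_of_ne hm with hmneg | hmpos
    · -- m < 0 : show 2*m + n ≤ 0
      have hc : 2 * m + n ≤ 0 := by nlinarith [sq_nonneg (n + 2*m - 1), sq_nonneg n, sq_nonneg m]
      have hcR : ((2 * m + n : ℤ) : ℝ) ≤ 0 := by exact_mod_cast hc
      have hmR : (m : ℝ) ≤ -1 := by exact_mod_cast (by omega : m ≤ -1)
      have : 2 * (m : ℝ) + ((2 * m + n : ℤ) : ℝ) * x ≤ -2 := by
        nlinarith
      calc (2:ℝ) ≤ -(2 * (m : ℝ) + ((2 * m + n : ℤ) : ℝ) * x) := by linarith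
        _ ≤ |2 * (m : ℝ) + ((2 * m + n : ℤ) : ℝ) * x| := neg_le_abs _
    · -- m > 0 : show 0 ≤ 2*m + n
      have hc : 0 ≤ 2 * m + n := by nlinarith [sq_nonneg (n + 2*m + 1), sq_nonneg n, sq_nonneg m]
      have hcR : (0:ℝ) ≤ ((2 * m + n : ℤ) : ℝ) := by exact_mod_cast hc
      have hmR : (1:ℝ) ≤ (m : ℝ) := by exact_mod_cast hmpos
      have h2 : (2:ℝ) ≤ 2 * (m : ℝ) + ((2 * m + n : ℤ) : ℝ) * x := by nlinarith
      exact le_trans h2 (le_abs_self _)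

theorem no_vanishing_area_sequence (A B : ℝ) (hA : 0 < A) (hAB : A ≤ B)
    (m n k : ℤ) (hk1 : 1 ≤ k) (hk5 : k ≤ 5)
    (hmn : 2 * m ^ 2 - n ^ 2 = -k)
    (x : ℕ → ℝ) (hx : ∀ i, A ≤ x i ∧ x i ≤ B)
    (hlim : Filter.Tendsto
      (fun i => (2 * (m : ℝ) * (1 + x i) + (n : ℝ) * x i) / Real.sqrt (1 + 2 * x i + (x i) ^ 2 / 2))
      Filter.atTop (nhds 0)) :
    False := by
  set M : ℝ := Real.sqrt (1 + 2 * B + B ^ 2 / 2) with hM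
  have hB : 0 < B := lt_of_lt_of_le hA hAB
  have hMpos : 0 < M := Real.sqrt_pos.mpr (by nlinarith)
  set δ : ℝ := min A 2 with hδ
  have hδpos : 0 < δ := lt_min hA two_pos
  have key : ∀ i, δ / M ≤
      |(2 * (m : ℝ) * (1 + x i) + (n : ℝ) * x i) / Real.sqrt (1 + 2 * x i + (x i) ^ 2 / 2)| := by
    intro i
    obtain ⟨h1, h2⟩ := hx i
    have hxpos : 0 < x i := lt_of_lt_of_le hA h1
    have hDpos : 0 < Real.sqrt (1 + 2 * x i + (x i) ^ 2 / 2) :=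
      Real.sqrt_pos.mpr (by nlinarith)
    have hDM : Real.sqrt (1 + 2 * x i + (x i) ^ 2 / 2) ≤ M :=
      Real.sqrt_le_sqrt (by nlinarith)
    have hnum := num_bound_aux m n k hk1 hk5 hmn A hA (x i) h1
    rw [abs_div, abs_of_pos hDpos]
    gcongr
  have hε : 0 < δ / M := div_pos hδpos hMpos
  obtain ⟨N, hN⟩ := (Metric.tendsto_atTop.mp hlim) (δ / M) hε
  have := hN N le_rfl
  rw [Real.dist_eq, sub_zero] at this
  exact absurd this (not_lt.mpr (key N))
end
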